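/- arXiv:1202.3411 — 2 statements merged into one kernel-verified Lean document; each statement's English description precedes it below -/
import Mathlib

section
/- Let α ⪯ β be compositions of n. For each index 1 ≤ j ≤ ℓ(β)−1, set ξ_{α,β}(j) = j if β_j and β_{j+1} arise from the same part of α, and 0 otherwise. Then Σ_{γ: α ⪯ γ ⪯ β} (−1)^{ℓ(γ)−ℓ(β)} t^{g(γ,β)} = ∏_{j: ξ_{α,β}(j) = j} (1 − t^j) in ℤ[t], where g(γ,β) = Σ_j ξ_{γ,β}(j). -/
/-- The set of proper partial sums of a composition. -/
def csub {n : ℕ} (α : Composition n) : Finset ℕ :=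
  (Finset.Ico 1 α.length).image α.sizeUpTo

/-- For `γ ⪯ β`, `g(γ,β) = Σ_{j=1}^{ℓ(β)−1} ξ_{γ,β}(j)`, where `ξ_{γ,β}(j) = j` iff
`β_j` and `β_{j+1}` arise from the same part of `γ`, i.e. the `j`-th partial sum of `β`
is not a boundary of `γ`. -/
def gwt {n : ℕ} (γ β : Composition n) : ℕ :=
  ∑ j ∈ Finset.Ico 1 β.length, if β.sizeUpTo j ∈ csub γ then 0 else j

/-!
A composition `γ` with `α ⪯ γ ⪯ β` is determined by its set of partial sums `csub γ`, and any set
between `csub α` and `csub β` occurs. Recording instead the indices `j` of the partial sums of `β`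
that `γ` drops (those with `ξ_{γ,β}(j) = j`) identifies these `γ` with the subsets `S` of
`{j : ξ_{α,β}(j) = j}`, and then `ℓ(β) − ℓ(γ) = |S|` and `g(γ,β) = Σ_{j ∈ S} j`. So the left-hand
side is the expansion of `∏ (1 − t^j)` as a sum over subsets.
-/

open Finset

theorem Finset.prod_one_sub_pow_eq_sum_powerset {R : Type*} [CommRing R] (x : R) (J : Finset ℕ) :
    ∏ j ∈ J, (1 - x ^ j) = ∑ S ∈ J.powerset, (-1) ^ S.card * x ^ (∑ j ∈ S, j) := by
  simp only [sub_eq_add_neg, prod_one_add, prod_neg]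
  exact sum_congr rfl fun S _ => congrArg _ (prod_pow_eq_pow_sum S id x)

namespace Composition

variable {n : ℕ}

lemma strictMonoOn_sizeUpTo (γ : Composition n) : StrictMonoOn γ.sizeUpTo (Set.Iic γ.length) :=
  strictMonoOn_Iic_of_lt_succ fun _ h => γ.sizeUpTo_strict_mono h

lemma injOn_sizeUpTo_Ico (γ : Composition n) :
    Set.InjOn γ.sizeUpTo (Ico 1 γ.length : Finset ℕ) :=
  γ.strictMonoOn_sizeUpTo.injOn.mono fun _ h => Set.mem_Iic.2 (mem_Ico.1 h).2.le

end Composition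

theorem Finset.insert_insert_inter_Ioo {α : Type*} [Preorder α] [LocallyFiniteOrder α]
    [DecidableEq α] {a b : α} {C : Finset α} (hC : C ⊆ Ioo a b) :
    insert a (insert b C) ∩ Ioo a b = C := by
  rw [insert_inter_of_notMem (by simp), insert_inter_of_notMem (by simp), inter_eq_left.2 hC]

section

open Composition

variable {n : ℕ}

lemma csub_subset_Ioo (γ : Composition n) : csub γ ⊆ Ioo 0 n := by
  intro x hx
  obtain ⟨i, hi, rfl⟩ := mem_image.1 hx
  obtain ⟨h1, h2⟩ := mem_Ico.1 hi
  have hi' : i ∈ Set.Iic γ.length := h2.le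
  have mono := γ.strictMonoOn_sizeUpTo
  refine mem_Ioo.2 ⟨?_, ?_⟩
  · simpa using mono (by simp) hi' h1
  · simpa using mono hi' (by simp) h2

lemma card_csub (γ : Composition n) : (csub γ).card = γ.length - 1 := by
  rw [csub, card_image_of_injOn γ.injOn_sizeUpTo_Ico, Nat.card_Ico]

lemma image_val_boundaries (γ : Composition n) :
    γ.boundaries.image Fin.val = insert 0 (insert n (csub γ)) := by
  have himage : γ.boundaries.image Fin.val = (range (γ.length + 1)).image γ.sizeUpTo := by
    rw [boundaries, map_eq_image, image_image, ← image_fin_univ, image_image]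
    rfl
  have hrange : range (γ.length + 1) = insert 0 (insert γ.length (Ico 1 γ.length)) := by
    ext i
    simp only [mem_range, mem_insert, mem_Ico]
    omega
  rw [himage, hrange, image_insert, image_insert, sizeUpTo_zero, sizeUpTo_length, csub]

lemma csub_injective : Function.Injective (csub (n := n)) := by
  intro γ γ' h
  apply (compositionEquiv n).injective
  apply CompositionAsSet.ext
  apply image_injective Fin.val_injective
  simp only [compositionEquiv, Equiv.coe_fn_mk, toCompositionAsSet_boundaries,
    image_val_boundaries, h]

lemma exists_csub_eq {T : Finset ℕ} (hT : T ⊆ Ioo 0 n) : ∃ γ : Composition n, csub γ = T := by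
  have hlt : ∀ m ∈ insert 0 (insert n T), m < n + 1 := by
    intro m hm
    rcases mem_insert.1 hm with rfl | hm
    · omega
    rcases mem_insert.1 hm with rfl | hm
    · omega
    exact (mem_Ioo.1 (hT hm)).2.trans n.lt_succ_self
  let c : CompositionAsSet n :=
    ⟨(insert 0 (insert n T)).attachFin hlt, by simp [mem_attachFin], by simp [mem_attachFin]⟩
  refine ⟨c.toComposition, ?_⟩
  rw [← insert_insert_inter_Ioo (csub_subset_Ioo _), ← image_val_boundaries,
    CompositionAsSet.toComposition_boundaries, image_val_attachFin, insert_insert_inter_Ioo hT]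

-- The indices `j` with `ξ_{γ,β}(j) = j`.
def mergedIndices (γ β : Composition n) : Finset ℕ :=
  (Ico 1 β.length).filter (fun j => β.sizeUpTo j ∉ csub γ)

lemma gwt_eq_sum_mergedIndices (γ β : Composition n) : gwt γ β = ∑ j ∈ mergedIndices γ β, j := by
  rw [gwt, mergedIndices, sum_filter]
  exact sum_congr rfl fun j _ => by split_ifs <;> rfl

lemma image_sizeUpTo_mergedIndices (γ β : Composition n) :
    (mergedIndices γ β).image β.sizeUpTo = csub β \ csub γ := by
  show _ = (Ico 1 β.length).image β.sizeUpTo \ csub γ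
  rw [sdiff_eq_filter, filter_image]
  rfl

lemma mergedIndices_subset (γ β : Composition n) : mergedIndices γ β ⊆ Ico 1 β.length :=
  filter_subset _ _

lemma card_mergedIndices {γ β : Composition n} (h : csub γ ⊆ csub β) :
    (mergedIndices γ β).card = β.length - γ.length := by
  have hγ := γ.length_eq_zero
  have hβ := β.length_eq_zero
  rw [← card_image_of_injOn (β.injOn_sizeUpTo_Ico.mono (mergedIndices_subset γ β)),
    image_sizeUpTo_mergedIndices, card_sdiff_of_subset h, card_csub, card_csub]
  omega

lemma mergedIndices_subset_mergedIndices {α γ : Composition n} (h : csub α ⊆ csub γ)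
    (β : Composition n) : mergedIndices γ β ⊆ mergedIndices α β :=
  monotone_filter_right _ fun _ _ hj hα => hj (h hα)

lemma csub_eq_sdiff_image_mergedIndices {γ β : Composition n} (h : csub γ ⊆ csub β) :
    csub γ = csub β \ (mergedIndices γ β).image β.sizeUpTo := by
  rw [image_sizeUpTo_mergedIndices, Finset.sdiff_sdiff_eq_self h]

lemma exists_mergedIndices_eq {α β : Composition n} (h : csub α ⊆ csub β) {S : Finset ℕ}
    (hS : S ⊆ mergedIndices α β) :
    ∃ γ : Composition n, (csub α ⊆ csub γ ∧ csub γ ⊆ csub β) ∧ mergedIndices γ β = S := by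
  have hSβ : S.image β.sizeUpTo ⊆ csub β \ csub α := by
    rw [← image_sizeUpTo_mergedIndices]
    exact image_subset_image hS
  obtain ⟨γ, hγ⟩ : ∃ γ : Composition n, csub γ = csub β \ S.image β.sizeUpTo :=
    exists_csub_eq (sdiff_subset.trans (csub_subset_Ioo β))
  refine ⟨γ, ⟨?_, hγ ▸ sdiff_subset⟩, ?_⟩
  · rw [hγ]
    exact subset_sdiff.2 ⟨h, disjoint_sdiff.mono_right hSβ⟩
  · rw [← image_eq_image_iff_of_injOn β.injOn_sizeUpTo_Ico (mergedIndices_subset γ β)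
      (hS.trans (mergedIndices_subset α β)), image_sizeUpTo_mergedIndices, hγ,
      Finset.sdiff_sdiff_eq_self (hSβ.trans sdiff_subset)]

end

open Polynomial in
/-- For `α ⪯ β`, `Σ_{γ: α ⪯ γ ⪯ β} (−1)^{ℓ(γ)−ℓ(β)} t^{g(γ,β)} = ∏_{j: ξ_{α,β}(j)=j} (1−t^j)`
in `ℤ[t]`.  (Since `ℓ(γ) ≤ ℓ(β)` on the interval, `(−1)^{ℓ(γ)−ℓ(β)} = (−1)^{ℓ(β)−ℓ(γ)}`.) -/
theorem M_MG_product_formula (n : ℕ) (α β : Composition n) (h : csub α ⊆ csub β) :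
    (∑ γ ∈ Finset.univ.filter
        (fun γ : Composition n => csub α ⊆ csub γ ∧ csub γ ⊆ csub β),
      ((-1 : Polynomial ℤ) ^ (β.length - γ.length) * X ^ gwt γ β)) =
    ∏ j ∈ (Finset.Ico 1 β.length).filter (fun j => β.sizeUpTo j ∉ csub α),
      (1 - X ^ j) := by
  rw [← mergedIndices, prod_one_sub_pow_eq_sum_powerset]
  refine sum_nbij (mergedIndices · β) ?_ ?_ ?_ ?_
  · intro γ hγ
    exact mem_powerset.2 (mergedIndices_subset_mergedIndices (mem_filter.1 hγ).2.1 β)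
  · intro γ₁ hγ₁ γ₂ hγ₂ heq
    apply csub_injective
    rw [csub_eq_sdiff_image_mergedIndices (mem_filter.1 hγ₁).2.2,
      csub_eq_sdiff_image_mergedIndices (mem_filter.1 hγ₂).2.2]
    exact congrArg (fun S => csub β \ S.image β.sizeUpTo) heq
  · intro S hS
    obtain ⟨γ, hγ, rfl⟩ := exists_mergedIndices_eq h (mem_powerset.1 hS)
    exact ⟨γ, mem_filter.2 ⟨mem_univ γ, hγ⟩, rfl⟩
  · intro γ hγ
    rw [card_mergedIndices (mem_filter.1 hγ).2.2, gwt_eq_sum_mergedIndices]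
end

section
/- Weighted peak-to-G expansion identity: let A ⊆ {1,…,n−1} have no two consecutive elements and let B = {b₁ < ⋯ < b_p} ⊆ {1,…,n−1} satisfy A ⊆ B ∪ (B+1). For C ⊆ B with A ⊆ C △ (C+1), let g(C) = Σ_{i : b_i ∉ C} i (sum of positions i with b_i excluded from C). Then Σ_{C ⊆ B, A ⊆ C △ (C+1)} t^{g(C)} = ∏_{i=1}^{p} k(b_i) in ℤ[t], where k(b_i) = 1+t^i if b_i ∉ A ∪ (A−1); k(b_i) = t^{i−1}+t^i if b_i ∈ A and b_{i−1} = b_i − 1; and k(b_i) = 1 otherwise. -/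
/-- `S + 1 = {s+1 : s ∈ S} \ {n}`. -/
def shiftUp (n : ℕ) (S : Finset ℕ) : Finset ℕ := (S.image (· + 1)).erase n

/-- `S − 1 = {s−1 : s ∈ S} \ {0}`. -/
def shiftDown (S : Finset ℕ) : Finset ℕ := (S.image (· - 1)).erase 0

/-- The (1-based) position of `b` in the increasing enumeration of `B`. -/
def posIn (B : Finset ℕ) (b : ℕ) : ℕ := (B.filter (· ≤ b)).card

open Polynomial in
/-- The factor `k(b_i)` of the `M(K,G)` product formula. -/
noncomputable def kfac (A B : Finset ℕ) (b : ℕ) : Polynomial ℤ :=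
  if b ∉ A ∪ shiftDown A then 1 + X ^ posIn B b
  else if b ∈ A ∧ b - 1 ∈ B then X ^ (posIn B b - 1) + X ^ posIn B b
  else 1

open Finset Polynomial

lemma mem_shiftUp {n a : ℕ} {S : Finset ℕ} (h1 : 1 ≤ a) (hn : a ≠ n) :
    a ∈ shiftUp n S ↔ a - 1 ∈ S := by
  simp only [shiftUp, Finset.mem_erase, Finset.mem_image]
  constructor
  · rintro ⟨-, s, hs, rfl⟩; simpa using hs
  · intro h; exact ⟨hn, a - 1, h, by omega⟩

lemma mem_shiftDown {a : ℕ} {S : Finset ℕ} :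
    a ∈ shiftDown S ↔ a ≠ 0 ∧ a + 1 ∈ S := by
  simp only [shiftDown, Finset.mem_erase, Finset.mem_image]
  constructor
  · rintro ⟨h0, s, hs, rfl⟩
    refine ⟨h0, ?_⟩
    have : s - 1 + 1 = s := by omega
    rwa [this]
  · rintro ⟨h0, h⟩; exact ⟨h0, a + 1, h, rfl⟩

lemma cond_iff {n : ℕ} {A C : Finset ℕ} (hA : A ⊆ Finset.Icc 1 (n - 1)) :
    A ⊆ (C \ shiftUp n C) ∪ (shiftUp n C \ C) ↔
      ∀ a ∈ A, ¬(a ∈ C ↔ a - 1 ∈ C) := by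
  constructor
  · intro h a ha
    have h1 : 1 ≤ a ∧ a ≤ n - 1 := by simpa using hA ha
    have hn : a ≠ n := by omega
    have := h ha
    simp only [Finset.mem_union, Finset.mem_sdiff, mem_shiftUp h1.1 hn] at this
    tauto
  · intro h a ha
    have h1 : 1 ≤ a ∧ a ≤ n - 1 := by simpa using hA ha
    have hn : a ≠ n := by omega
    have := h a ha
    simp only [Finset.mem_union, Finset.mem_sdiff, mem_shiftUp h1.1 hn]
    tauto

lemma posIn_erase {B : Finset ℕ} {m b : ℕ} (h : b < m) :
    posIn (B.erase m) b = posIn B b := by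
  unfold posIn
  rw [Finset.filter_erase, Finset.erase_eq_of_notMem]
  simp only [Finset.mem_filter]
  intro hc
  exact absurd hc.2 (by simpa using h.not_ge)

lemma posIn_max {B : Finset ℕ} {m : ℕ} (hm : ∀ b ∈ B, b ≤ m) :
    posIn B m = B.card := by
  unfold posIn
  rw [Finset.filter_true_of_mem hm]

lemma kfac_congr {A A' B B' : Finset ℕ} {b : ℕ}
    (e1 : posIn B' b = posIn B b) (e3 : b ∈ A' ↔ b ∈ A)
    (e4 : b + 1 ∈ A' ↔ b + 1 ∈ A) (e5 : b - 1 ∈ B' ↔ b - 1 ∈ B) :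
    kfac A B b = kfac A' B' b := by
  unfold kfac
  simp only [Finset.mem_union, mem_shiftDown, e1, e3, e4, e5]

theorem main_aux (n : ℕ) : ∀ p : ℕ, ∀ A B : Finset ℕ, B.card = p →
    A ⊆ Finset.Icc 1 (n - 1) → B ⊆ Finset.Icc 1 (n - 1) →
    (∀ i : ℕ, ¬(i ∈ A ∧ i + 1 ∈ A)) →
    A ⊆ B ∪ shiftUp n B →
    (∑ C ∈ B.powerset.filter
        (fun C => A ⊆ (C \ shiftUp n C) ∪ (shiftUp n C \ C)),
      (X : Polynomial ℤ) ^ (∑ b ∈ B \ C, posIn B b)) =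
    ∏ b ∈ B, kfac A B b := by
  intro p
  induction p using Nat.strong_induction_on with
  | _ p IH =>
  intro A B hcard hA hB hcons hAB
  rcases B.eq_empty_or_nonempty with rfl | hne
  · have hU : shiftUp n (∅ : Finset ℕ) = ∅ := by simp [shiftUp]
    rw [hU] at hAB
    have : A = ∅ := by simpa using hAB
    subst this
    simp
  · set m := B.max' hne with hmdef
    have hmB : m ∈ B := B.max'_mem hne
    have hle : ∀ b ∈ B, b ≤ m := fun b hb => B.le_max' b hb
    have hmIcc : 1 ≤ m ∧ m ≤ n - 1 := by simpa using hB hmB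
    have hposm : posIn B m = p := by rw [posIn_max hle, hcard]
    set B' := B.erase m with hB'def
    have hmB' : m ∉ B' := Finset.notMem_erase _ _
    have hpow : B.powerset = (insert m B').powerset := by
      rw [Finset.insert_erase hmB]
    have hB'sub : B' ⊆ Finset.Icc 1 (n - 1) := (Finset.erase_subset _ _).trans hB
    have hcard' : B'.card < p := hcard ▸ Finset.card_erase_lt_of_mem hmB
    have hltB' : ∀ b ∈ B', b < m := fun b hb =>
      lt_of_le_of_ne (hle b (Finset.mem_of_mem_erase hb)) (Finset.ne_of_mem_erase hb)
    have hsd1 : ∀ C' ⊆ B', B \ insert m C' = B' \ C' := by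
      intro C' hsub
      ext x
      simp only [Finset.mem_sdiff, Finset.mem_insert, Finset.mem_erase, hB'def, not_or]
      tauto
    have hsd2 : ∀ C' ⊆ B', B \ C' = insert m (B' \ C') := by
      intro C' hsub
      have hmC : m ∉ C' := fun h => hmB' (hsub h)
      ext x
      simp only [Finset.mem_sdiff, Finset.mem_insert, Finset.mem_erase, hB'def]
      by_cases hx : x = m <;> simp [hx, hmB, hmC] <;> tauto
    have hgsum1 : ∀ C' ⊆ B',
        (∑ b ∈ B \ insert m C', posIn B b) = ∑ b ∈ B' \ C', posIn B' b := by
      intro C' hsub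
      rw [hsd1 C' hsub]
      exact Finset.sum_congr rfl fun b hb =>
        (posIn_erase (hltB' b (Finset.mem_sdiff.mp hb).1)).symm
    have hgsum2 : ∀ C' ⊆ B',
        (∑ b ∈ B \ C', posIn B b) = p + ∑ b ∈ B' \ C', posIn B' b := by
      intro C' hsub
      rw [hsd2 C' hsub, Finset.sum_insert (fun hc => hmB' (Finset.mem_sdiff.mp hc).1),
        hposm]
      congr 1
      exact Finset.sum_congr rfl fun b hb =>
        (posIn_erase (hltB' b (Finset.mem_sdiff.mp hb).1)).symm
    by_cases hmA : m ∈ A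
    · by_cases hm1B : m - 1 ∈ B
      · -- Case 1: m ∈ A, m - 1 ∈ B : pair (m-1, m)
        have hm1Icc : 1 ≤ m - 1 ∧ m - 1 ≤ n - 1 := by simpa using hB hm1B
        have hm2 : 2 ≤ m := by omega
        have hm1A : m - 1 ∉ A := by
          intro h
          refine hcons (m - 1) ⟨h, ?_⟩
          have he : m - 1 + 1 = m := by omega
          rw [he]; exact hmA
        have hpA : m + 1 ∉ A := fun h => hcons m ⟨hmA, h⟩
        have hm1B'mem : m - 1 ∈ B' := Finset.mem_erase.mpr ⟨by omega, hm1B⟩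
        set B'' := B'.erase (m - 1) with hB''def
        have hm1nB'' : m - 1 ∉ B'' := Finset.notMem_erase _ _
        have hmnB'' : m ∉ insert (m - 1) B'' := by
          intro h
          rcases Finset.mem_insert.mp h with h | h
          · omega
          · exact hmB' (Finset.mem_of_mem_erase h)
        have hpow2 : B.powerset = (insert m (insert (m - 1) B'')).powerset := by
          rw [hB''def, Finset.insert_erase hm1B'mem, hB'def, Finset.insert_erase hmB]
        have hB''sub : B'' ⊆ Finset.Icc 1 (n - 1) := (Finset.erase_subset _ _).trans hB'sub
        have hcard'' : B''.card < p :=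
          lt_trans (Finset.card_erase_lt_of_mem hm1B'mem) hcard'
        have hltB'' : ∀ b ∈ B'', b < m - 1 := by
          intro b hb
          have h1 := hltB' b (Finset.mem_of_mem_erase hb)
          have h2 := Finset.ne_of_mem_erase hb
          omega
        have hposIn'' : ∀ b ∈ B'', posIn B'' b = posIn B b := by
          intro b hb
          rw [hB''def, posIn_erase (hltB'' b hb), hB'def,
            posIn_erase (by have := hltB'' b hb; omega : b < m)]
        have hposm1 : posIn B (m - 1) = p - 1 := by
          unfold posIn
          have hfe : B.filter (· ≤ m - 1) = B.erase m := by
            ext x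
            simp only [Finset.mem_filter, Finset.mem_erase]
            constructor
            · rintro ⟨h1, h2⟩; exact ⟨by omega, h1⟩
            · rintro ⟨h1, h2⟩; exact ⟨h2, by have := hle x h2; omega⟩
          rw [hfe, Finset.card_erase_of_mem hmB, hcard]
        have hAe : A.erase m ⊆ Finset.Icc 1 (n - 1) :=
          (Finset.erase_subset _ _).trans hA
        have hconsE : ∀ i : ℕ, ¬(i ∈ A.erase m ∧ i + 1 ∈ A.erase m) :=
          fun i hi => hcons i ⟨Finset.mem_of_mem_erase hi.1, Finset.mem_of_mem_erase hi.2⟩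
        have hABE : A.erase m ⊆ B'' ∪ shiftUp n B'' := by
          intro a ha
          have haA : a ∈ A := Finset.mem_of_mem_erase ha
          have hane : a ≠ m := Finset.ne_of_mem_erase ha
          have ham1 : a ≠ m - 1 := fun h => hm1A (h ▸ haA)
          have hap1 : a ≠ m + 1 := fun h => hpA (h ▸ haA)
          have haIcc : 1 ≤ a ∧ a ≤ n - 1 := by simpa using hA haA
          have hn : a ≠ n := by omega
          rcases Finset.mem_union.mp (hAB haA) with h | h
          · refine Finset.mem_union_left _ ?_
            rw [hB''def, Finset.mem_erase, hB'def, Finset.mem_erase]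
            exact ⟨ham1, hane, h⟩
          · refine Finset.mem_union_right _ ?_
            rw [mem_shiftUp haIcc.1 hn] at h ⊢
            rw [hB''def, Finset.mem_erase, hB'def, Finset.mem_erase]
            exact ⟨by omega, by omega, h⟩
        -- set difference computations
        have hsdc : ∀ C'' ⊆ B'', B \ insert (m - 1) C'' = insert m (B'' \ C'') := by
          intro C'' hsub
          have hmC : m ∉ C'' := fun h => absurd (hltB'' m (hsub h)) (by omega)
          ext x
          simp only [Finset.mem_sdiff, Finset.mem_insert, not_or, hB''def, hB'def,
            Finset.mem_erase]
          constructor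
          · rintro ⟨hxB, hx1, hx2⟩
            by_cases hxm : x = m
            · exact Or.inl hxm
            · exact Or.inr ⟨⟨hx1, hxm, hxB⟩, hx2⟩
          · rintro (rfl | ⟨⟨h1, h2, h3⟩, h4⟩)
            · exact ⟨hmB, by omega, hmC⟩
            · exact ⟨h3, h1, h4⟩
        have hsdm : ∀ C'' ⊆ B'', B \ insert m C'' = insert (m - 1) (B'' \ C'') := by
          intro C'' hsub
          have hm1C : m - 1 ∉ C'' := fun h => absurd (hltB'' (m - 1) (hsub h)) (by omega)
          ext x
          simp only [Finset.mem_sdiff, Finset.mem_insert, not_or, hB''def, hB'def,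
            Finset.mem_erase]
          constructor
          · rintro ⟨hxB, hx1, hx2⟩
            by_cases hxm : x = m - 1
            · exact Or.inl hxm
            · exact Or.inr ⟨⟨hxm, hx1, hxB⟩, hx2⟩
          · rintro (rfl | ⟨⟨h1, h2, h3⟩, h4⟩)
            · exact ⟨hm1B, by omega, hm1C⟩
            · exact ⟨h3, h2, h4⟩
        have hgc : ∀ C'' ⊆ B'',
            (∑ b ∈ B \ insert (m - 1) C'', posIn B b) = p + ∑ b ∈ B'' \ C'', posIn B'' b := by
          intro C'' hsub
          rw [hsdc C'' hsub, Finset.sum_insert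
            (fun hc => absurd (hltB'' m (Finset.mem_sdiff.mp hc).1) (by omega)), hposm]
          congr 1
          exact Finset.sum_congr rfl fun b hb => (hposIn'' b (Finset.mem_sdiff.mp hb).1).symm
        have hgm : ∀ C'' ⊆ B'',
            (∑ b ∈ B \ insert m C'', posIn B b) = (p - 1) + ∑ b ∈ B'' \ C'', posIn B'' b := by
          intro C'' hsub
          rw [hsdm C'' hsub, Finset.sum_insert
            (fun hc => absurd (hltB'' (m - 1) (Finset.mem_sdiff.mp hc).1) (by omega)), hposm1]
          congr 1
          exact Finset.sum_congr rfl fun b hb => (hposIn'' b (Finset.mem_sdiff.mp hb).1).symm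
        -- vanishing sums
        have hz0 : ∀ C'' ∈ B''.powerset,
            (if A ⊆ C'' \ shiftUp n C'' ∪ shiftUp n C'' \ C'' then
              (X : Polynomial ℤ) ^ (∑ b ∈ B \ C'', posIn B b) else 0) = 0 := by
          intro C'' hC''
          have hsub : C'' ⊆ B'' := Finset.mem_powerset.mp hC''
          rw [if_neg]
          intro hP
          have h1 : m ∉ C'' := fun h => absurd (hltB'' m (hsub h)) (by omega)
          have h2 : m - 1 ∉ C'' := fun h => absurd (hltB'' (m - 1) (hsub h)) (by omega)
          exact (cond_iff hA).mp hP m hmA (iff_of_false h1 h2)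
        have hzb : ∀ C'' ∈ B''.powerset,
            (if A ⊆ insert m (insert (m - 1) C'') \ shiftUp n (insert m (insert (m - 1) C'')) ∪
                shiftUp n (insert m (insert (m - 1) C'')) \ insert m (insert (m - 1) C'') then
              (X : Polynomial ℤ) ^ (∑ b ∈ B \ insert m (insert (m - 1) C''), posIn B b)
              else 0) = 0 := by
          intro C'' hC''
          rw [if_neg]
          intro hP
          have h1 : m ∈ insert m (insert (m - 1) C'') := Finset.mem_insert_self _ _
          have h2 : m - 1 ∈ insert m (insert (m - 1) C'') :=
            Finset.mem_insert_of_mem (Finset.mem_insert_self _ _)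
          exact (cond_iff hA).mp hP m hmA (iff_of_true h1 h2)
        -- condition transfers
        have hcondc : ∀ C'' ∈ B''.powerset,
            (A ⊆ insert (m - 1) C'' \ shiftUp n (insert (m - 1) C'') ∪
              shiftUp n (insert (m - 1) C'') \ insert (m - 1) C'') ↔
            (A.erase m ⊆ C'' \ shiftUp n C'' ∪ shiftUp n C'' \ C'') := by
          intro C'' hC''
          have hsub : C'' ⊆ B'' := Finset.mem_powerset.mp hC''
          have hmC : m ∉ C'' := fun h => absurd (hltB'' m (hsub h)) (by omega)
          rw [cond_iff hA, cond_iff hAe]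
          constructor
          · intro h a ha
            have haA : a ∈ A := Finset.mem_of_mem_erase ha
            have hane : a ≠ m := Finset.ne_of_mem_erase ha
            have ham1 : a ≠ m - 1 := fun he => hm1A (he ▸ haA)
            have h1a : 1 ≤ a := (by simpa using hA haA : 1 ≤ a ∧ a ≤ n - 1).1
            have ham2 : a - 1 ≠ m - 1 := by omega
            have := h a haA
            simpa [Finset.mem_insert, ham1, ham2] using this
          · intro h a ha
            by_cases hae : a = m
            · subst hae
              intro hiff
              have h2 : m - 1 ∈ insert (m - 1) C'' := Finset.mem_insert_self _ _
              rcases Finset.mem_insert.mp (hiff.mpr h2) with h3 | h3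
              · omega
              · exact hmC h3
            · have haA : a ∈ A := ha
              have ham1 : a ≠ m - 1 := fun he => hm1A (he ▸ haA)
              have h1a : 1 ≤ a := (by simpa using hA haA : 1 ≤ a ∧ a ≤ n - 1).1
              have ham2 : a - 1 ≠ m - 1 := by omega
              have := h a (Finset.mem_erase.mpr ⟨hae, ha⟩)
              simpa [Finset.mem_insert, ham1, ham2] using this
        have hcondm : ∀ C'' ∈ B''.powerset,
            (A ⊆ insert m C'' \ shiftUp n (insert m C'') ∪
              shiftUp n (insert m C'') \ insert m C'') ↔
            (A.erase m ⊆ C'' \ shiftUp n C'' ∪ shiftUp n C'' \ C'') := by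
          intro C'' hC''
          have hsub : C'' ⊆ B'' := Finset.mem_powerset.mp hC''
          have hm1C : m - 1 ∉ C'' := fun h => absurd (hltB'' (m - 1) (hsub h)) (by omega)
          rw [cond_iff hA, cond_iff hAe]
          constructor
          · intro h a ha
            have haA : a ∈ A := Finset.mem_of_mem_erase ha
            have hane : a ≠ m := Finset.ne_of_mem_erase ha
            have hap1 : a ≠ m + 1 := fun he => hpA (he ▸ haA)
            have h1a : 1 ≤ a := (by simpa using hA haA : 1 ≤ a ∧ a ≤ n - 1).1
            have ham2 : a - 1 ≠ m := by omega
            have := h a haA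
            simpa [Finset.mem_insert, hane, ham2] using this
          · intro h a ha
            by_cases hae : a = m
            · subst hae
              intro hiff
              rcases Finset.mem_insert.mp (hiff.mp (Finset.mem_insert_self _ _)) with h3 | h3
              · omega
              · exact hm1C h3
            · have hap1 : a ≠ m + 1 := fun he => hpA (he ▸ ha)
              have h1a : 1 ≤ a := (by simpa using hA ha : 1 ≤ a ∧ a ≤ n - 1).1
              have ham2 : a - 1 ≠ m := by omega
              have := h a (Finset.mem_erase.mpr ⟨hae, ha⟩)
              simpa [Finset.mem_insert, hae, ham2] using this
        -- kfac values
        have hkm1 : kfac A B m = X ^ (p - 1) + X ^ p := by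
          unfold kfac
          rw [if_neg (not_not_intro (Finset.mem_union_left _ hmA)),
            if_pos ⟨hmA, hm1B⟩, hposm]
        have hkm2 : kfac A B (m - 1) = 1 := by
          unfold kfac
          have hsd : m - 1 ∈ shiftDown A := by
            rw [mem_shiftDown]
            refine ⟨by omega, ?_⟩
            have he : m - 1 + 1 = m := by omega
            rw [he]; exact hmA
          rw [if_neg (not_not_intro (Finset.mem_union_right _ hsd)),
            if_neg (fun h => hm1A h.1)]
        have hkb : ∀ b ∈ B'', kfac A B b = kfac (A.erase m) B'' b := by
          intro b hb
          have hblt : b < m - 1 := hltB'' b hb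
          refine kfac_congr (hposIn'' b hb)
            (by rw [Finset.mem_erase]; exact ⟨fun h => h.2, fun h => ⟨by omega, h⟩⟩)
            (by rw [Finset.mem_erase]; exact ⟨fun h => h.2, fun h => ⟨by omega, h⟩⟩)
            ?_
          rw [hB''def, Finset.mem_erase, hB'def, Finset.mem_erase]
          exact ⟨fun h => h.2.2, fun h => ⟨by omega, by omega, h⟩⟩
        -- summand transfers
        have ec : ∀ C'' ∈ B''.powerset,
            (if A ⊆ insert (m - 1) C'' \ shiftUp n (insert (m - 1) C'') ∪
                shiftUp n (insert (m - 1) C'') \ insert (m - 1) C'' then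
              (X : Polynomial ℤ) ^ (∑ b ∈ B \ insert (m - 1) C'', posIn B b) else 0) =
            X ^ p * (if A.erase m ⊆ C'' \ shiftUp n C'' ∪ shiftUp n C'' \ C'' then
              (X : Polynomial ℤ) ^ (∑ b ∈ B'' \ C'', posIn B'' b) else 0) := by
          intro C'' hC''
          rw [mul_ite, mul_zero]
          exact if_congr (hcondc C'' hC'')
            (by rw [hgc C'' (Finset.mem_powerset.mp hC''), pow_add]) rfl
        have em : ∀ C'' ∈ B''.powerset,
            (if A ⊆ insert m C'' \ shiftUp n (insert m C'') ∪
                shiftUp n (insert m C'') \ insert m C'' then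
              (X : Polynomial ℤ) ^ (∑ b ∈ B \ insert m C'', posIn B b) else 0) =
            X ^ (p - 1) * (if A.erase m ⊆ C'' \ shiftUp n C'' ∪ shiftUp n C'' \ C'' then
              (X : Polynomial ℤ) ^ (∑ b ∈ B'' \ C'', posIn B'' b) else 0) := by
          intro C'' hC''
          rw [mul_ite, mul_zero]
          exact if_congr (hcondm C'' hC'')
            (by rw [hgm C'' (Finset.mem_powerset.mp hC''), pow_add]) rfl
        have hIH := IH B''.card hcard'' (A.erase m) B'' rfl hAe hB''sub hconsE hABE
        rw [Finset.sum_filter] at hIH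
        rw [Finset.sum_filter, hpow2, Finset.sum_powerset_insert hmnB'',
          Finset.sum_powerset_insert hm1nB'', Finset.sum_powerset_insert hm1nB'',
          Finset.sum_eq_zero hz0, Finset.sum_eq_zero hzb,
          Finset.sum_congr rfl ec, Finset.sum_congr rfl em,
          ← Finset.mul_sum, ← Finset.mul_sum, hIH, zero_add, add_zero,
          ← Finset.mul_prod_erase B _ hmB, ← hB'def,
          ← Finset.mul_prod_erase B' _ hm1B'mem, ← hB''def,
          hkm1, hkm2, one_mul, Finset.prod_congr rfl hkb]
        ring
      · -- Case 2: m ∈ A forced, m - 1 ∉ B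
        have hAe : A.erase m ⊆ Finset.Icc 1 (n - 1) :=
          (Finset.erase_subset _ _).trans hA
        have hconsE : ∀ i : ℕ, ¬(i ∈ A.erase m ∧ i + 1 ∈ A.erase m) :=
          fun i hi => hcons i ⟨Finset.mem_of_mem_erase hi.1, Finset.mem_of_mem_erase hi.2⟩
        have hABE : A.erase m ⊆ B' ∪ shiftUp n B' := by
          intro a ha
          have haA : a ∈ A := Finset.mem_of_mem_erase ha
          have hane : a ≠ m := Finset.ne_of_mem_erase ha
          have haIcc : 1 ≤ a ∧ a ≤ n - 1 := by simpa using hA haA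
          have hn : a ≠ n := by omega
          have ham1 : a ≠ m + 1 := fun h => hcons m ⟨hmA, h ▸ haA⟩
          rcases Finset.mem_union.mp (hAB haA) with h | h
          · exact Finset.mem_union_left _ (Finset.mem_erase.mpr ⟨hane, h⟩)
          · refine Finset.mem_union_right _ ?_
            rw [mem_shiftUp haIcc.1 hn] at h ⊢
            exact Finset.mem_erase.mpr ⟨by omega, h⟩
        have hz : ∀ C' ∈ B'.powerset,
            (if A ⊆ C' \ shiftUp n C' ∪ shiftUp n C' \ C' then
              (X : Polynomial ℤ) ^ (∑ b ∈ B \ C', posIn B b) else 0) = 0 := by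
          intro C' hC'
          have hsub : C' ⊆ B' := Finset.mem_powerset.mp hC'
          rw [if_neg]
          intro hP
          have h1 : m ∉ C' := fun h => hmB' (hsub h)
          have h2 : m - 1 ∉ C' := fun h =>
            hm1B (Finset.mem_of_mem_erase (hsub h))
          exact (cond_iff hA).mp hP m hmA (iff_of_false h1 h2)
        have hcond2 : ∀ C' ∈ B'.powerset,
            (A ⊆ insert m C' \ shiftUp n (insert m C') ∪
              shiftUp n (insert m C') \ insert m C') ↔
            (A.erase m ⊆ C' \ shiftUp n C' ∪ shiftUp n C' \ C') := by
          intro C' hC'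
          have hsub : C' ⊆ B' := Finset.mem_powerset.mp hC'
          rw [cond_iff hA, cond_iff hAe]
          constructor
          · intro h a ha
            have haA : a ∈ A := Finset.mem_of_mem_erase ha
            have hane : a ≠ m := Finset.ne_of_mem_erase ha
            have h1a : 1 ≤ a := (by simpa using hA haA : 1 ≤ a ∧ a ≤ n - 1).1
            have ham1 : a - 1 ≠ m := by
              intro he
              have : a = m + 1 := by omega
              exact hcons m ⟨hmA, this ▸ haA⟩
            have := h a haA
            simpa [Finset.mem_insert, hane, ham1] using this
          · intro h a ha
            by_cases hae : a = m
            · subst hae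
              have h1 : m - 1 ∉ C' := fun hc =>
                hm1B (Finset.mem_of_mem_erase (hsub hc))
              intro hiff
              have h2 := hiff.mp (Finset.mem_insert_self m C')
              rcases Finset.mem_insert.mp h2 with h3 | h3
              · omega
              · exact h1 h3
            · have h1a : 1 ≤ a := (by simpa using hA ha : 1 ≤ a ∧ a ≤ n - 1).1
              have ham1 : a - 1 ≠ m := by
                intro he
                have : a = m + 1 := by omega
                exact hcons m ⟨hmA, this ▸ ha⟩
              have := h a (Finset.mem_erase.mpr ⟨hae, ha⟩)
              simpa [Finset.mem_insert, hae, ham1] using this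
        have hkm : kfac A B m = 1 := by
          unfold kfac
          rw [if_neg (not_not_intro (Finset.mem_union_left _ hmA)),
            if_neg (fun h => hm1B h.2)]
        have hkb : ∀ b ∈ B', kfac A B b = kfac (A.erase m) B' b := by
          intro b hb
          have hbB : b ∈ B := Finset.mem_of_mem_erase hb
          have hblt : b < m := hltB' b hb
          have hb1 : b + 1 ≠ m := by
            intro h
            have h2 : m - 1 = b := by omega
            exact hm1B (h2 ▸ hbB)
          exact kfac_congr (posIn_erase hblt)
            (by rw [Finset.mem_erase]; exact ⟨fun h => h.2, fun h => ⟨by omega, h⟩⟩)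
            (by rw [Finset.mem_erase]; exact ⟨fun h => h.2, fun h => ⟨hb1, h⟩⟩)
            (by rw [hB'def, Finset.mem_erase]; exact ⟨fun h => h.2, fun h => ⟨by omega, h⟩⟩)
        have e2 : ∀ C' ∈ B'.powerset,
            (if A ⊆ insert m C' \ shiftUp n (insert m C') ∪
                shiftUp n (insert m C') \ insert m C' then
              (X : Polynomial ℤ) ^ (∑ b ∈ B \ insert m C', posIn B b) else 0) =
            (if A.erase m ⊆ C' \ shiftUp n C' ∪ shiftUp n C' \ C' then
              (X : Polynomial ℤ) ^ (∑ b ∈ B' \ C', posIn B' b) else 0) := by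
          intro C' hC'
          exact if_congr (hcond2 C' hC')
            (by rw [hgsum1 C' (Finset.mem_powerset.mp hC')]) rfl
        have hIH := IH B'.card hcard' (A.erase m) B' rfl hAe hB'sub hconsE hABE
        rw [Finset.sum_filter] at hIH
        rw [Finset.sum_filter, hpow, Finset.sum_powerset_insert hmB',
          Finset.sum_eq_zero hz, zero_add, Finset.sum_congr rfl e2, hIH,
          ← Finset.mul_prod_erase B _ hmB, hkm, one_mul, ← hB'def,
          Finset.prod_congr rfl hkb]
    · by_cases hm1A : m + 1 ∈ A
      · -- Case 3: m + 1 ∈ A, m ∉ A : m forced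
        have hAe : A.erase (m + 1) ⊆ Finset.Icc 1 (n - 1) :=
          (Finset.erase_subset _ _).trans hA
        have hconsE : ∀ i : ℕ, ¬(i ∈ A.erase (m + 1) ∧ i + 1 ∈ A.erase (m + 1)) :=
          fun i hi => hcons i ⟨Finset.mem_of_mem_erase hi.1, Finset.mem_of_mem_erase hi.2⟩
        have hm1nB : m + 1 ∉ B := fun h => by have := hle _ h; omega
        have hABE : A.erase (m + 1) ⊆ B' ∪ shiftUp n B' := by
          intro a ha
          have haA : a ∈ A := Finset.mem_of_mem_erase ha
          have hane1 : a ≠ m + 1 := Finset.ne_of_mem_erase ha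
          have hane : a ≠ m := fun h => hmA (h ▸ haA)
          have haIcc : 1 ≤ a ∧ a ≤ n - 1 := by simpa using hA haA
          have hn : a ≠ n := by omega
          rcases Finset.mem_union.mp (hAB haA) with h | h
          · exact Finset.mem_union_left _ (Finset.mem_erase.mpr ⟨hane, h⟩)
          · refine Finset.mem_union_right _ ?_
            rw [mem_shiftUp haIcc.1 hn] at h ⊢
            exact Finset.mem_erase.mpr ⟨by omega, h⟩
        have hz : ∀ C' ∈ B'.powerset,
            (if A ⊆ C' \ shiftUp n C' ∪ shiftUp n C' \ C' then
              (X : Polynomial ℤ) ^ (∑ b ∈ B \ C', posIn B b) else 0) = 0 := by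
          intro C' hC'
          have hsub : C' ⊆ B' := Finset.mem_powerset.mp hC'
          rw [if_neg]
          intro hP
          have h1 : m + 1 ∉ C' := fun h => hm1nB (Finset.mem_of_mem_erase (hsub h))
          have h2 : m + 1 - 1 ∉ C' := fun h => hmB' (by simpa using hsub h)
          exact (cond_iff hA).mp hP (m + 1) hm1A (iff_of_false h1 h2)
        have hcond2 : ∀ C' ∈ B'.powerset,
            (A ⊆ insert m C' \ shiftUp n (insert m C') ∪
              shiftUp n (insert m C') \ insert m C') ↔
            (A.erase (m + 1) ⊆ C' \ shiftUp n C' ∪ shiftUp n C' \ C') := by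
          intro C' hC'
          have hsub : C' ⊆ B' := Finset.mem_powerset.mp hC'
          rw [cond_iff hA, cond_iff hAe]
          constructor
          · intro h a ha
            have haA : a ∈ A := Finset.mem_of_mem_erase ha
            have hane1 : a ≠ m + 1 := Finset.ne_of_mem_erase ha
            have hane : a ≠ m := fun he => hmA (he ▸ haA)
            have h1a : 1 ≤ a := (by simpa using hA haA : 1 ≤ a ∧ a ≤ n - 1).1
            have ham1 : a - 1 ≠ m := by omega
            have := h a haA
            simpa [Finset.mem_insert, hane, ham1] using this
          · intro h a ha
            by_cases hae : a = m + 1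
            · subst hae
              have h1 : m + 1 ∉ C' := fun hc => hm1nB (Finset.mem_of_mem_erase (hsub hc))
              intro hiff
              have h2 : m + 1 - 1 ∈ insert m C' := by
                simpa using Finset.mem_insert_self m C'
              rcases Finset.mem_insert.mp (hiff.mpr h2) with h3 | h3
              · omega
              · exact h1 h3
            · have hane : a ≠ m := fun he => hmA (he ▸ ha)
              have h1a : 1 ≤ a := (by simpa using hA ha : 1 ≤ a ∧ a ≤ n - 1).1
              have ham1 : a - 1 ≠ m := by omega
              have := h a (Finset.mem_erase.mpr ⟨hae, ha⟩)
              simpa [Finset.mem_insert, hane, ham1] using this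
        have hkm : kfac A B m = 1 := by
          unfold kfac
          rw [if_neg (not_not_intro (Finset.mem_union_right _
            (mem_shiftDown.mpr ⟨by omega, hm1A⟩))), if_neg (fun h => hmA h.1)]
        have hkb : ∀ b ∈ B', kfac A B b = kfac (A.erase (m + 1)) B' b := by
          intro b hb
          have hblt : b < m := hltB' b hb
          exact kfac_congr (posIn_erase hblt)
            (by rw [Finset.mem_erase]; exact ⟨fun h => h.2, fun h => ⟨by omega, h⟩⟩)
            (by rw [Finset.mem_erase]; exact ⟨fun h => h.2, fun h => ⟨by omega, h⟩⟩)
            (by rw [hB'def, Finset.mem_erase]; exact ⟨fun h => h.2, fun h => ⟨by omega, h⟩⟩)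
        have e2 : ∀ C' ∈ B'.powerset,
            (if A ⊆ insert m C' \ shiftUp n (insert m C') ∪
                shiftUp n (insert m C') \ insert m C' then
              (X : Polynomial ℤ) ^ (∑ b ∈ B \ insert m C', posIn B b) else 0) =
            (if A.erase (m + 1) ⊆ C' \ shiftUp n C' ∪ shiftUp n C' \ C' then
              (X : Polynomial ℤ) ^ (∑ b ∈ B' \ C', posIn B' b) else 0) := by
          intro C' hC'
          exact if_congr (hcond2 C' hC')
            (by rw [hgsum1 C' (Finset.mem_powerset.mp hC')]) rfl
        have hIH := IH B'.card hcard' (A.erase (m + 1)) B' rfl hAe hB'sub hconsE hABE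
        rw [Finset.sum_filter] at hIH
        rw [Finset.sum_filter, hpow, Finset.sum_powerset_insert hmB',
          Finset.sum_eq_zero hz, zero_add, Finset.sum_congr rfl e2, hIH,
          ← Finset.mul_prod_erase B _ hmB, hkm, one_mul, ← hB'def,
          Finset.prod_congr rfl hkb]
      · -- Case 4: m is free
        have hAB4 : A ⊆ B' ∪ shiftUp n B' := by
          intro a ha
          have haIcc : 1 ≤ a ∧ a ≤ n - 1 := by simpa using hA ha
          have hn : a ≠ n := by omega
          have hane : a ≠ m := fun h => hmA (h ▸ ha)
          have ham1 : a ≠ m + 1 := fun h => hm1A (h ▸ ha)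
          rcases Finset.mem_union.mp (hAB ha) with h | h
          · exact Finset.mem_union_left _ (Finset.mem_erase.mpr ⟨hane, h⟩)
          · refine Finset.mem_union_right _ ?_
            rw [mem_shiftUp haIcc.1 hn] at h ⊢
            exact Finset.mem_erase.mpr ⟨by omega, h⟩
        have hcond : ∀ C' ∈ B'.powerset,
            (A ⊆ (insert m C' \ shiftUp n (insert m C')) ∪
              (shiftUp n (insert m C') \ insert m C')) ↔
            (A ⊆ (C' \ shiftUp n C') ∪ (shiftUp n C' \ C')) := by
          intro C' hC'
          rw [cond_iff hA, cond_iff hA]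
          apply forall₂_congr
          intro a ha
          have hane : a ≠ m := fun h => hmA (h ▸ ha)
          have ham1 : a - 1 ≠ m := by
            intro h
            have h1 : 1 ≤ a := (by simpa using hA ha : 1 ≤ a ∧ a ≤ n - 1).1
            have : a = m + 1 := by omega
            exact hm1A (this ▸ ha)
          simp [Finset.mem_insert, hane, ham1]
        have hkm : kfac A B m = 1 + X ^ p := by
          unfold kfac
          rw [if_pos, hposm]
          simp only [Finset.mem_union, mem_shiftDown, not_or, not_and]
          exact ⟨hmA, fun _ => hm1A⟩
        have hkb : ∀ b ∈ B', kfac A B b = kfac A B' b :=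
          fun b hb => kfac_congr (posIn_erase (hltB' b hb)) Iff.rfl Iff.rfl
            (by rw [hB'def, Finset.mem_erase]
                exact ⟨fun h => h.2, fun h => ⟨by have := hltB' b hb; omega, h⟩⟩)
        have e2 : ∀ C' ∈ B'.powerset,
            (if A ⊆ insert m C' \ shiftUp n (insert m C') ∪
                shiftUp n (insert m C') \ insert m C' then
              (X : Polynomial ℤ) ^ (∑ b ∈ B \ insert m C', posIn B b) else 0) =
            (if A ⊆ C' \ shiftUp n C' ∪ shiftUp n C' \ C' then
              (X : Polynomial ℤ) ^ (∑ b ∈ B' \ C', posIn B' b) else 0) := by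
          intro C' hC'
          exact if_congr (hcond C' hC')
            (by rw [hgsum1 C' (Finset.mem_powerset.mp hC')]) rfl
        have e1 : ∀ C' ∈ B'.powerset,
            (if A ⊆ C' \ shiftUp n C' ∪ shiftUp n C' \ C' then
              (X : Polynomial ℤ) ^ (∑ b ∈ B \ C', posIn B b) else 0) =
            X ^ p * (if A ⊆ C' \ shiftUp n C' ∪ shiftUp n C' \ C' then
              (X : Polynomial ℤ) ^ (∑ b ∈ B' \ C', posIn B' b) else 0) := by
          intro C' hC'
          split_ifs with h
          · rw [hgsum2 C' (Finset.mem_powerset.mp hC'), pow_add]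
          · rw [mul_zero]
        have hIH := IH B'.card hcard' A B' rfl hA hB'sub hcons hAB4
        rw [Finset.sum_filter] at hIH
        rw [Finset.sum_filter, hpow, Finset.sum_powerset_insert hmB',
          Finset.sum_congr rfl e1, Finset.sum_congr rfl e2, ← Finset.mul_sum, hIH,
          ← Finset.mul_prod_erase B _ hmB, hkm, ← hB'def,
          Finset.prod_congr rfl hkb]
        ring


open Polynomial in
/-- Weighted peak-to-G expansion identity:
`Σ_{C ⊆ B, A ⊆ C △ (C+1)} t^{g(C)} = ∏_{i=1}^p k(b_i)` in `ℤ[t]`, where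
`g(C) = Σ_{i : b_i ∉ C} i`. -/
theorem weighted_peak_to_G (n : ℕ) (A B : Finset ℕ)
    (hA : A ⊆ Finset.Icc 1 (n - 1)) (hB : B ⊆ Finset.Icc 1 (n - 1))
    (hcons : ∀ i : ℕ, ¬(i ∈ A ∧ i + 1 ∈ A))
    (hAB : A ⊆ B ∪ shiftUp n B) :
    (∑ C ∈ B.powerset.filter
        (fun C => A ⊆ (C \ shiftUp n C) ∪ (shiftUp n C \ C)),
      (X : Polynomial ℤ) ^ (∑ b ∈ B \ C, posIn B b)) =
    ∏ b ∈ B, kfac A B b := by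
  exact main_aux n B.card A B rfl hA hB hcons hAB
end
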